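/- Let H be a linear s-uniform hypergraph on a vertex set V, let G be a graph on V with an injective map h from the edge set of G to the hyperedges of H such that both endpoints of each edge e of G lie in h(e), and let Γ be a graph on V such that both endpoints of every edge of Γ lie in some common hyperedge of H. Let the edges of Γ be colored with k colors. Suppose Q = v_0 v_1 … v_{ℓ−1} is a good cycle of length ℓ in G such that for every edge v_i v_{i+1} of Q there is a cycle D_i of length 5 in Γ which is an induced subgraph of Γ, all of whose vertices lie in h(v_i v_{i+1}), on which v_i and v_{i+1} are at distance 2, and such that all edges of all the cycles D_i receive the same color. Then for every integer t with 2ℓ ≤ t ≤ 3ℓ, Γ contains a monochromatic cycle of length t which is an induced subgraph of Γ. -/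

import Mathlib

/-!
Replace every edge `xy` of the good cycle `Q` by one of the two arcs from `x` to `y` of its
pentagon, of length `2` or `3`; taking the long arc for `t - 2ℓ` edges gives a closed walk of
length `t`, monochromatic since all pentagons are. By condition (i) of goodness the hyperedges of
distinct edges of `Q` meet only in common endpoints, so the arcs are internally disjoint and the
walk is a cycle. By condition (ii) an edge of `Γ` between two vertices of the walk lies inside a
single hyperedge `h e`, whose vertices on the walk are those of the arc of `e`; that arc is induced
because the pentagon is, so the edge belongs to the walk.
-/

open SimpleGraph

def IsGoodPath {V : Type*} [DecidableEq V] (H : Set (Finset V))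
    {G : SimpleGraph V} (h : Sym2 V → Finset V) {u v : V} (P : G.Walk u v) : Prop :=
  (∀ e ∈ P.edges, ∀ e' ∈ P.edges, e ≠ e' →
      ∀ x : V, (x ∈ h e ∧ x ∈ h e') ↔ (x ∈ e ∧ x ∈ e')) ∧
  (∀ f ∈ H, (∀ e ∈ P.edges, f ≠ h e) →
      ∀ x y : V, x ∈ f → y ∈ f →
        (∃ e ∈ P.edges, x ∈ h e) → (∃ e' ∈ P.edges, y ∈ h e') → x = y)

/-- A cycle `Q` in `G` is good if every pair of its edges is contained in a good
subpath of `Q` (a subpath being an initial segment of a rotation of `Q`). -/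
def IsGoodCycle {V : Type*} [DecidableEq V] (H : Set (Finset V))
    {G : SimpleGraph V} (h : Sym2 V → Finset V) {v : V} (Q : G.Walk v v) : Prop :=
  Q.IsCycle ∧
  ∀ e ∈ Q.edges, ∀ e' ∈ Q.edges,
    ∃ (a : V) (ha : a ∈ Q.support) (b : V) (hb : b ∈ (Q.rotate a ha).support),
      ((Q.rotate a ha).takeUntil b hb).IsPath ∧
      IsGoodPath H h ((Q.rotate a ha).takeUntil b hb) ∧
      e ∈ ((Q.rotate a ha).takeUntil b hb).edges ∧
      e' ∈ ((Q.rotate a ha).takeUntil b hb).edges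

theorem List.Nodup.sum_map_ite_mem_take {α M : Type*} [DecidableEq α] [AddCommMonoid M]
    {l : List α} (hl : l.Nodup) {m : ℕ} (hm : m ≤ l.length) (a b : M) :
    (l.map fun x => if x ∈ l.take m then a else b).sum = m • a + (l.length - m) • b := by
  set f := fun x => if x ∈ l.take m then a else b
  calc (l.map f).sum = ((l.take m).map f).sum + ((l.drop m).map f).sum := by
        rw [← List.sum_append, ← List.map_append, List.take_append_drop]
    _ = ((l.take m).map fun _ => a).sum + ((l.drop m).map fun _ => b).sum := by
        rw [List.map_congr_left fun x hx => if_pos hx, List.map_congr_left fun x hx =>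
          if_neg fun hx' => List.disjoint_take_drop hl le_rfl hx' hx]
    _ = m • a + (l.length - m) • b := by simp [hm]

namespace SimpleGraph.Walk

variable {V : Type*} {G Γ : SimpleGraph V} {u v w : V}

def bind (R : ∀ ⦃x y⦄, G.Adj x y → Γ.Walk x y) : ∀ {u v : V}, G.Walk u v → Γ.Walk u v
  | _, _, nil => nil
  | _, _, cons h q => (R h).append (bind R q)

variable (R : ∀ ⦃x y⦄, G.Adj x y → Γ.Walk x y)

@[simp] theorem bind_nil : (nil : G.Walk u u).bind R = nil := rfl

@[simp] theorem bind_cons (h : G.Adj u v) (q : G.Walk v w) :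
    (cons h q).bind R = (R h).append (q.bind R) := rfl

theorem length_bind_of_forall_length_eq {p : G.Walk u v} {len : Sym2 V → ℕ}
    (hlen : ∀ d ∈ p.darts, (R d.adj).length = len d.edge) :
    (p.bind R).length = (p.edges.map len).sum := by
  induction p with
  | nil => rfl
  | cons h q ih =>
    simp only [bind_cons, length_append, edges_cons, List.map_cons, List.sum_cons]
    rw [hlen _ List.mem_cons_self, ih fun d hd => hlen d (.tail _ hd)]
    rfl

theorem length_le_length_bind (p : G.Walk u v) : p.length ≤ (p.bind R).length := by
  induction p with
  | nil => rfl
  | cons h q ih =>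
    have := not_nil_iff_lt_length.mp (not_nil_of_ne (p := R h) h.ne)
    simp only [bind_cons, length_append, length_cons]
    omega

theorem mem_edges_bind {p : G.Walk u v} {e : Sym2 V} :
    e ∈ (p.bind R).edges ↔ ∃ d ∈ p.darts, e ∈ (R d.adj).edges := by
  induction p with
  | nil => simp
  | cons h q ih =>
    simp only [bind_cons, edges_append, List.mem_append, ih, darts_cons, List.exists_mem_cons_iff]

theorem eq_or_exists_mem_darts_of_mem_support_bind {p : G.Walk u v} {x : V}
    (hx : x ∈ (p.bind R).support) :
    x = u ∨ ∃ d ∈ p.darts, x ∈ (R d.adj).support := by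
  induction p with
  | nil => simpa using hx
  | @cons a b _ h q ih =>
    rw [bind_cons, mem_support_append_iff] at hx
    rcases hx with hx | hx
    · exact .inr ⟨⟨(a, b), h⟩, List.mem_cons_self, hx⟩
    · rcases ih hx with hxv | ⟨d, hd, hxd⟩
      · exact .inr ⟨⟨(a, b), h⟩, List.mem_cons_self, by rw [hxv]; exact end_mem_support _⟩
      · exact .inr ⟨d, List.mem_cons_of_mem _ hd, hxd⟩

theorem exists_mem_darts_of_mem_support_bind {p : G.Walk u v} (hp : ¬p.Nil) {x : V}
    (hx : x ∈ (p.bind R).support) : ∃ d ∈ p.darts, x ∈ (R d.adj).support := by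
  cases p with
  | nil => exact absurd .nil hp
  | @cons _ b _ h q =>
    exact (eq_or_exists_mem_darts_of_mem_support_bind R hx).elim
      (fun hxu => ⟨⟨(u, b), h⟩, List.mem_cons_self, by rw [hxu]; exact start_mem_support _⟩) id

theorem IsPath.start_notMem_support_tail {p : G.Walk u v} (hp : p.IsPath) : u ∉ p.support.tail := by
  rw [isPath_def, ← cons_tail_support, List.nodup_cons] at hp
  exact hp.1

variable {S : Sym2 V → Set V}

theorem mem_edge_and_mem_support_of_mem_support_bind {h : G.Adj u v} {q : G.Walk v w}
    (hS : ∀ e ∈ (cons h q).edges, ∀ e' ∈ (cons h q).edges, e ≠ e' → ∀ x ∈ S e, x ∈ S e' → x ∈ e)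
    (hfresh : s(u, v) ∉ q.edges) (hRS : ∀ d ∈ q.darts, ∀ x ∈ (R d.adj).support, x ∈ S d.edge)
    {z : V} (hz : z ∈ S s(u, v)) (hzq : z ∈ (q.bind R).support) :
    z ∈ s(u, v) ∧ z ∈ q.support := by
  rcases eq_or_exists_mem_darts_of_mem_support_bind R hzq with rfl | ⟨d, hd, hzd⟩
  · exact ⟨Sym2.mem_mk_right _ _, start_mem_support _⟩
  have hdq : d.edge ∈ q.edges := List.mem_map_of_mem hd
  have hne : s(u, v) ≠ d.edge := fun heq => hfresh (heq ▸ hdq)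
  have hzS := hRS d hd z hzd
  refine ⟨hS _ List.mem_cons_self _ (.tail _ hdq) hne z hz hzS, ?_⟩
  rcases Sym2.mem_iff.mp (hS _ (.tail _ hdq) _ List.mem_cons_self hne.symm z hzS hz) with rfl | rfl
  · exact dart_fst_mem_support_of_mem_darts _ hd
  · exact dart_snd_mem_support_of_mem_darts _ hd

theorem IsPath.bind {p : G.Walk u v} (hp : p.IsPath)
    (hS : ∀ e ∈ p.edges, ∀ e' ∈ p.edges, e ≠ e' → ∀ x ∈ S e, x ∈ S e' → x ∈ e)
    (hR : ∀ d ∈ p.darts, (R d.adj).IsPath)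
    (hRS : ∀ d ∈ p.darts, ∀ x ∈ (R d.adj).support, x ∈ S d.edge) :
    (p.bind R).IsPath := by
  induction p with
  | nil => exact .nil
  | cons h q ih =>
    rw [cons_isPath_iff] at hp
    have hq := ih hp.1 (fun e he e' he' => hS e (.tail _ he) e' (.tail _ he'))
      (fun d hd => hR d (.tail _ hd)) (fun d hd => hRS d (.tail _ hd))
    rw [bind_cons, isPath_def, support_append, List.nodup_append']
    refine ⟨(hR _ List.mem_cons_self).support_nodup, hq.support_nodup.sublist (List.tail_sublist _),
      List.disjoint_left.mpr fun z hz hz' => ?_⟩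
    have hfresh := ((cons_isPath_iff h q).mpr hp).isTrail
    rw [isTrail_cons] at hfresh
    obtain ⟨hzuv, hzq⟩ := mem_edge_and_mem_support_of_mem_support_bind R hS hfresh.2
      (fun d hd => hRS d (.tail _ hd)) (hRS _ List.mem_cons_self z hz) (List.mem_of_mem_tail hz')
    rcases Sym2.mem_iff.mp hzuv with rfl | rfl
    · exact hp.2 hzq
    · exact hq.start_notMem_support_tail hz'

theorem IsCycle.bind {p : G.Walk u u} (hp : p.IsCycle)
    (hS : ∀ e ∈ p.edges, ∀ e' ∈ p.edges, e ≠ e' → ∀ x ∈ S e, x ∈ S e' → x ∈ e)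
    (hR : ∀ d ∈ p.darts, (R d.adj).IsPath)
    (hRS : ∀ d ∈ p.darts, ∀ x ∈ (R d.adj).support, x ∈ S d.edge) :
    (p.bind R).IsCycle := by
  cases p with
  | nil => exact absurd hp not_isCycle_nil
  | cons h q =>
    have hlen := hp.three_le_length
    rw [cons_isCycle_iff] at hp
    have hq := hp.1.bind R (fun e he e' he' => hS e (.tail _ he) e' (.tail _ he'))
      (fun d hd => hR d (.tail _ hd)) (fun d hd => hRS d (.tail _ hd))
    refine (hR _ List.mem_cons_self).isCycle_append hq
      (List.disjoint_left.mpr fun z hz hz' => ?_) (.inr ?_)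
    · obtain ⟨hzuv, -⟩ := mem_edge_and_mem_support_of_mem_support_bind R hS hp.2
        (fun d hd => hRS d (.tail _ hd)) (hRS _ List.mem_cons_self z (List.mem_of_mem_tail hz))
        (List.mem_of_mem_tail hz')
      rcases Sym2.mem_iff.mp hzuv with rfl | rfl
      · exact (hR _ List.mem_cons_self).start_notMem_support_tail hz
      · exact hq.start_notMem_support_tail hz'
    · have := length_le_length_bind R q
      rw [length_cons] at hlen
      omega

theorem IsTrail.mem_support_of_mem_of_mem_support {p : G.Walk u v} (hp : p.IsTrail)
    (hS : ∀ e ∈ p.edges, ∀ e' ∈ p.edges, e ≠ e' → ∀ x ∈ S e, x ∈ S e' → x ∈ e)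
    (hRS : ∀ d ∈ p.darts, ∀ x ∈ (R d.adj).support, x ∈ S d.edge)
    {d d' : G.Dart} (hd : d ∈ p.darts) (hd' : d' ∈ p.darts) {x : V}
    (hx : x ∈ (R d'.adj).support) (hxd : x ∈ S d.edge) : x ∈ (R d.adj).support := by
  obtain rfl | hdd := eq_or_ne d' d
  · exact hx
  have hne : d.edge ≠ d'.edge := fun heq =>
    hdd (List.inj_on_of_nodup_map hp.edges_nodup hd' hd heq.symm)
  rcases Sym2.mem_iff.mp (hS _ (List.mem_map_of_mem hd) _ (List.mem_map_of_mem hd') hne x hxd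
    (hRS d' hd' x hx)) with rfl | rfl
  · exact start_mem_support _
  · exact end_mem_support _

theorem IsTrail.isChordless_bind {p : G.Walk u v} (hp : p.IsTrail) (hnil : ¬p.Nil)
    (hS : ∀ e ∈ p.edges, ∀ e' ∈ p.edges, e ≠ e' → ∀ x ∈ S e, x ∈ S e' → x ∈ e)
    (hRS : ∀ d ∈ p.darts, ∀ x ∈ (R d.adj).support, x ∈ S d.edge)
    (hR : ∀ d ∈ p.darts, (R d.adj).IsChordless)
    (hΓ : ∀ e ∈ p.edges, ∀ e' ∈ p.edges, ∀ a ∈ S e, ∀ b ∈ S e', Γ.Adj a b →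
      ∃ σ ∈ p.edges, a ∈ S σ ∧ b ∈ S σ) :
    (p.bind R).IsChordless := by
  refine isChordless_iff_forall_mem_edges.mpr fun a b ha hb hab => ?_
  obtain ⟨da, hda, ha⟩ := exists_mem_darts_of_mem_support_bind R hnil ha
  obtain ⟨db, hdb, hb⟩ := exists_mem_darts_of_mem_support_bind R hnil hb
  obtain ⟨σ, hσ, haσ, hbσ⟩ := hΓ _ (List.mem_map_of_mem hda) _ (List.mem_map_of_mem hdb) a
    (hRS da hda a ha) b (hRS db hdb b hb) hab
  obtain ⟨d, hd, rfl⟩ := List.mem_map.mp hσ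
  refine (mem_edges_bind R).mpr ⟨d, hd, (hR d hd).mem_edges ?_ ?_ hab⟩
  · exact hp.mem_support_of_mem_of_mem_support R hS hRS hd hda ha haσ
  · exact hp.mem_support_of_mem_of_mem_support R hS hRS hd hdb hb hbσ

theorem IsCycle.exists_arcs_of_length_eq_five {x y : V} {D : Γ.Walk x x} (hD : D.IsCycle)
    (h5 : D.length = 5) (h2 : D.getVert 2 = y) (hc : D.IsChordless) :
    ∃ P₂ P₃ : Γ.Walk x y, P₂.length = 2 ∧ P₃.length = 3 ∧
      ∀ P ∈ [P₂, P₃], P.IsPath ∧ P.IsChordless ∧ P.support ⊆ D.support ∧ P.edges ⊆ D.edges := by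
  rcases D with _ | ⟨h₁, _ | ⟨h₂, _ | ⟨h₃, _ | ⟨h₄, _ | ⟨h₅, _ | ⟨h₆, D⟩⟩⟩⟩⟩⟩ <;>
    simp only [length_cons, length_nil] at h5 <;> try omega
  simp only [getVert_cons_succ, getVert_zero] at h2
  subst h2
  rw [isChordless_iff_forall_mem_edges] at hc
  obtain ⟨-, -, hD⟩ := (isCycle_def _).mp hD
  simp only [support_cons, support_nil, List.tail_cons, List.nodup_cons, List.mem_cons,
    List.not_mem_nil, or_false, not_or, List.nodup_nil, not_false_eq_true, and_true] at hD
  refine ⟨cons h₁ (cons h₂ nil), cons h₅.symm (cons h₄.symm (cons h₃.symm nil)), rfl, rfl, ?_⟩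
  simp only [List.mem_cons, List.not_mem_nil, or_false]
  rintro P (rfl | rfl) <;> refine ⟨?_, isChordless_iff_forall_mem_edges.mpr ?_, ?_, ?_⟩
  all_goals
    simp only [cons_isPath_iff, support_cons, support_nil, edges_cons, edges_nil, List.mem_cons,
      List.not_mem_nil, or_false, IsPath.nil, true_and] at hc ⊢
  all_goals grind [Sym2.eq_iff]

theorem IsCycle.exists_isCycle_isChordless_of_arcs {Q : G.Walk v v} (hQ : Q.IsCycle)
    (hS : ∀ e ∈ Q.edges, ∀ e' ∈ Q.edges, e ≠ e' → ∀ x ∈ S e, x ∈ S e' → x ∈ e)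
    (hΓ : ∀ e ∈ Q.edges, ∀ e' ∈ Q.edges, ∀ a ∈ S e, ∀ b ∈ S e', Γ.Adj a b →
      ∃ σ ∈ Q.edges, a ∈ S σ ∧ b ∈ S σ)
    {C : Sym2 V → Prop}
    (harcs : ∀ x y, s(x, y) ∈ Q.edges → ∃ P₂ P₃ : Γ.Walk x y, P₂.length = 2 ∧ P₃.length = 3 ∧
      ∀ P ∈ [P₂, P₃], P.IsPath ∧ P.IsChordless ∧ (∀ z ∈ P.support, z ∈ S s(x, y)) ∧
        ∀ e ∈ P.edges, C e)
    {m : ℕ} (hm : m ≤ Q.length) :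
    ∃ W : Γ.Walk v v, W.IsCycle ∧ W.IsChordless ∧ W.length = 2 * Q.length + m ∧
      ∀ e ∈ W.edges, C e := by
  classical
  choose short long hshort hlong harc using harcs
  -- Routes are indexed by adjacency, so `Q` is moved to the graph whose edges are exactly its own.
  let G' := fromEdgeSet {e | e ∈ Q.edges}
  have hG' : ∀ ⦃x y⦄, G'.Adj x y → s(x, y) ∈ Q.edges :=
    fun _ _ hxy => ((fromEdgeSet_adj _).mp hxy).1
  let R : ∀ ⦃x y⦄, G'.Adj x y → Γ.Walk x y := fun x y hxy =>
    if s(x, y) ∈ Q.edges.take m then long x y (hG' hxy) else short x y (hG' hxy)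
  have hR : ∀ ⦃x y⦄ (hxy : G'.Adj x y), R hxy ∈ [short x y (hG' hxy), long x y (hG' hxy)] := by
    intro x y hxy
    by_cases hL : s(x, y) ∈ Q.edges.take m <;> simp [R, hL]
  have hRlen : ∀ ⦃x y⦄ (hxy : G'.Adj x y),
      (R hxy).length = if s(x, y) ∈ Q.edges.take m then 3 else 2 := by
    intro x y hxy
    by_cases hL : s(x, y) ∈ Q.edges.take m <;> simp [R, hL, hshort, hlong]
  have hQG' : ∀ e ∈ Q.edges, e ∈ G'.edgeSet := fun e he => by
    induction e with | h x y => exact (fromEdgeSet_adj _).mpr ⟨he, (Q.adj_of_mem_edges he).ne⟩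
  have hQ' := hQ.transfer hQG'
  have hedges : (Q.transfer G' hQG').edges = Q.edges := edges_transfer _ _
  rw [← hedges] at hS hΓ
  have hRS : ∀ d ∈ (Q.transfer G' hQG').darts, ∀ x ∈ (R d.adj).support, x ∈ S d.edge :=
    fun d _ => (harc _ _ _ _ (hR d.adj)).2.2.1
  refine ⟨_, hQ'.bind R hS (fun d _ => (harc _ _ _ _ (hR d.adj)).1) hRS,
    hQ'.isTrail.isChordless_bind R hQ'.not_nil hS hRS (fun d _ => (harc _ _ _ _ (hR d.adj)).2.1) hΓ,
    ?_, fun e he => ?_⟩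
  · rw [length_bind_of_forall_length_eq R (len := fun e => if e ∈ Q.edges.take m then 3 else 2)
      fun d _ => hRlen d.adj, hedges, hQ.edges_nodup.sum_map_ite_mem_take (by rwa [length_edges]),
      length_edges, smul_eq_mul, smul_eq_mul]
    omega
  · obtain ⟨d, -, hed⟩ := (mem_edges_bind R).mp he
    exact (harc _ _ _ _ (hR d.adj)).2.2.2 e hed

end SimpleGraph.Walk

section GoodCycle

variable {V : Type*} [DecidableEq V] {H : Set (Finset V)} {G : SimpleGraph V}
  {h : Sym2 V → Finset V} {v : V} {Q : G.Walk v v}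

theorem IsGoodCycle.mem_of_mem_of_mem_of_ne (hQ : IsGoodCycle H h Q) :
    ∀ e ∈ Q.edges, ∀ e' ∈ Q.edges, e ≠ e' → ∀ x ∈ h e, x ∈ h e' → x ∈ e := by
  intro e he e' he' hne x hx hx'
  obtain ⟨_, _, _, _, -, hgood, heP, he'P⟩ := hQ.2 e he e' he'
  exact ((hgood.1 e heP e' he'P hne x).mp ⟨hx, hx'⟩).1

theorem IsGoodCycle.exists_mem_edges_of_adj (hQ : IsGoodCycle H h Q) {Γ : SimpleGraph V}
    (hΓ : ∀ x y : V, Γ.Adj x y → ∃ f ∈ H, x ∈ f ∧ y ∈ f) :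
    ∀ e ∈ Q.edges, ∀ e' ∈ Q.edges, ∀ a ∈ h e, ∀ b ∈ h e', Γ.Adj a b →
      ∃ σ ∈ Q.edges, a ∈ h σ ∧ b ∈ h σ := by
  intro e he e' he' a ha b hb hab
  obtain ⟨x, hx, y, hy, -, hgood, heP, he'P⟩ := hQ.2 e he e' he'
  obtain ⟨f, hfH, haf, hbf⟩ := hΓ a b hab
  by_contra! hnot
  refine hab.ne (hgood.2 f hfH (fun σ hσ hfσ => ?_) a b haf hbf ⟨e, heP, ha⟩ ⟨e', he'P, hb⟩)
  have hσQ : σ ∈ Q.edges :=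
    (Q.rotate_edges x hx).mem_iff.mp (Walk.edges_takeUntil_subset_edges _ hy hσ)
  exact hnot σ hσQ (hfσ ▸ haf) (hfσ ▸ hbf)

end GoodCycle

theorem good_cycle_to_induced_cycle_odd_general {V : Type} [DecidableEq V] (s k : ℕ)
    (H : Set (Finset V))
    (G : SimpleGraph V) (h : Sym2 V → Finset V)
    (Γ : SimpleGraph V)
    (hΓ : ∀ x y : V, Γ.Adj x y → ∃ f ∈ H, x ∈ f ∧ y ∈ f)
    (c : Sym2 V → Fin k)
    (v : V) (Q : G.Walk v v) (ℓ : ℕ) (hℓ : Q.length = ℓ)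
    (hQ : IsGoodCycle H h Q)
    (κ : Fin k)
    (hD : ∀ x y : V, s(x, y) ∈ Q.edges →
      ∃ D : Γ.Walk x x, D.IsCycle ∧ D.length = 5 ∧ D.getVert 2 = y ∧
        (∀ z ∈ D.support, z ∈ h s(x, y)) ∧
        (∀ a ∈ D.support, ∀ b ∈ D.support, Γ.Adj a b → s(a, b) ∈ D.edges) ∧
        (∀ p ∈ D.edges, c p = κ))
    (t : ℕ) (ht1 : 2 * ℓ ≤ t) (ht2 : t ≤ 3 * ℓ) :
    ∃ (a : V) (W : Γ.Walk a a), W.IsCycle ∧ W.length = t ∧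
      (∀ p ∈ W.edges, ∀ q ∈ W.edges, c p = c q) ∧
      (∀ x ∈ W.support, ∀ y ∈ W.support, Γ.Adj x y → s(x, y) ∈ W.edges) := by
  have harcs : ∀ x y, s(x, y) ∈ Q.edges → ∃ P₂ P₃ : Γ.Walk x y, P₂.length = 2 ∧ P₃.length = 3 ∧
      ∀ P ∈ [P₂, P₃], P.IsPath ∧ P.IsChordless ∧ (∀ z ∈ P.support, z ∈ (h s(x, y) : Set V)) ∧
        ∀ e ∈ P.edges, c e = κ := by
    intro x y hxy
    obtain ⟨D, hDc, hD5, hD2, hDh, hDind, hDκ⟩ := hD x y hxy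
    obtain ⟨P₂, P₃, h₂, h₃, hP⟩ := hDc.exists_arcs_of_length_eq_five hD5 hD2
      (Walk.isChordless_iff_forall_mem_edges.mpr fun a b ha hb => hDind a ha b hb)
    refine ⟨P₂, P₃, h₂, h₃, fun P hP' => ?_⟩
    obtain ⟨hPp, hPc, hPs, hPe⟩ := hP P hP'
    exact ⟨hPp, hPc, fun z hz => hDh z (hPs hz), fun e he => hDκ e (hPe he)⟩
  obtain ⟨W, hWc, hWch, hWlen, hWκ⟩ := hQ.1.exists_isCycle_isChordless_of_arcs
    hQ.mem_of_mem_of_mem_of_ne (hQ.exists_mem_edges_of_adj hΓ) harcs (m := t - 2 * ℓ) (by omega)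
  exact ⟨v, W, hWc, by omega, fun p hp q hq => (hWκ p hp).trans (hWκ q hq).symm,
    fun x hx y hy hxy => hWch.mem_edges hx hy hxy⟩

/-- Lemma 5.6 part 2) of the paper: given a good cycle of length `ℓ` in the auxiliary
graph `G`, each of whose edges comes from a monochromatic induced `5`-cycle (of one
common color) inside its assigned hyperedge with the two endpoints at distance `2`
on that `5`-cycle, the host graph `Γ` contains a monochromatic induced cycle of
length `t` for every `t` with `2ℓ ≤ t ≤ 3ℓ`. -/
theorem good_cycle_to_induced_cycle_odd {V : Type} [DecidableEq V] (s k : ℕ)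
    (H : Set (Finset V))
    (huniform : ∀ e ∈ H, e.card = s)
    (hlinear : ∀ e ∈ H, ∀ f ∈ H, e ≠ f → (e ∩ f).card ≤ 1)
    (G : SimpleGraph V) (h : Sym2 V → Finset V)
    (hmem : ∀ e ∈ G.edgeSet, h e ∈ H ∧ ∀ x ∈ e, x ∈ h e)
    (hinj : Set.InjOn h G.edgeSet)
    (Γ : SimpleGraph V)
    (hΓ : ∀ x y : V, Γ.Adj x y → ∃ f ∈ H, x ∈ f ∧ y ∈ f)
    (c : Sym2 V → Fin k)
    (v : V) (Q : G.Walk v v) (ℓ : ℕ) (hℓ : Q.length = ℓ)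
    (hQ : IsGoodCycle H h Q)
    (κ : Fin k)
    (hD : ∀ x y : V, s(x, y) ∈ Q.edges →
      ∃ D : Γ.Walk x x, D.IsCycle ∧ D.length = 5 ∧ D.getVert 2 = y ∧
        (∀ z ∈ D.support, z ∈ h s(x, y)) ∧
        (∀ a ∈ D.support, ∀ b ∈ D.support, Γ.Adj a b → s(a, b) ∈ D.edges) ∧
        (∀ p ∈ D.edges, c p = κ))
    (t : ℕ) (ht1 : 2 * ℓ ≤ t) (ht2 : t ≤ 3 * ℓ) :
    ∃ (a : V) (W : Γ.Walk a a), W.IsCycle ∧ W.length = t ∧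
      (∀ p ∈ W.edges, ∀ q ∈ W.edges, c p = c q) ∧
      (∀ x ∈ W.support, ∀ y ∈ W.support, Γ.Adj x y → s(x, y) ∈ W.edges) :=
  good_cycle_to_induced_cycle_odd_general s k H G h Γ hΓ c v Q ℓ hℓ hQ κ hD t ht1 ht2
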